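/- arXiv:2306.01995 — 2 statements merged into one kernel-verified Lean document; each statement's English description precedes it below -/
import Mathlib

section
/- Let x_1, x_2, ... be an i.i.d. Bernoulli(p) sequence with p ∈ (0,1), let S_k = x_1 + ... + x_k, and fix ϱ > 0. Then P[ S_k / k ≥ p - ϱ for all k ≥ 1 ] > 0. -/
/-!
By the strong law of large numbers the running average almost surely ends up above `r = p - ϱ`.
Replacing the first values by ones only increases the sums, so for some `N`, with positive
probability, the running sums of `1, …, 1, x N, x (N + 1), …` (`N` ones) stay above `r` times
their length. This condition only involves `x N, x (N + 1), …`, hence is independent of the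
event `x 0 = ⋯ = x (N - 1) = 1`, which has probability `p ^ N > 0`. On the
intersection of the two events the average never drops below `r`.
-/

open MeasureTheory ProbabilityTheory Filter Finset Topology

section PartialSums

variable {a : ℕ → ℝ} {r : ℝ} {N : ℕ}

lemma sum_range_add_le_of_le_one (ha : ∀ i, a i ≤ 1) (m : ℕ) :
    ∑ i ∈ range (N + m), a i ≤ N + ∑ i ∈ range m, a (N + i) := by
  rw [sum_range_add]
  gcongr
  simpa using sum_le_card_nsmul (range N) a 1 fun i _ => ha i

lemma exists_forall_ge_mul_le_sum_range {p : ℝ}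
    (h : Tendsto (fun n : ℕ => (∑ i ∈ range n, a i) / n) atTop (𝓝 p)) (hrp : r < p) :
    ∃ N, ∀ k ≥ N, r * k ≤ ∑ i ∈ range k, a i := by
  obtain ⟨N, hN⟩ := eventually_atTop.1
    ((h.eventually (eventually_gt_nhds hrp)).and (eventually_ge_atTop 1))
  refine ⟨N, fun k hk => ?_⟩
  obtain ⟨hlt, hk1⟩ := hN k hk
  exact (le_div_iff₀ (by exact_mod_cast hk1)).1 hlt.le

lemma mul_le_sum_range_of_prefix_eq_one (hr : r ≤ 1) (hprefix : ∀ i < N, a i = 1)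
    (htail : ∀ m, r * ↑(N + m) ≤ N + ∑ i ∈ range m, a (N + i)) (k : ℕ) :
    r * k ≤ ∑ i ∈ range k, a i := by
  rcases le_or_gt N k with hNk | hkN
  · obtain ⟨m, rfl⟩ := Nat.exists_eq_add_of_le hNk
    rw [sum_range_add, sum_congr rfl fun i hi => hprefix i (mem_range.1 hi)]
    simpa using htail m
  · rw [sum_congr rfl fun i hi => hprefix i ((mem_range.1 hi).trans hkN)]
    simpa using mul_le_of_le_one_left k.cast_nonneg hr

end PartialSums

section ZeroOne

variable {Ω : Type*} {X : Ω → ℝ}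

lemma eq_indicator_of_zero_or_one (hX : ∀ ω, X ω = 0 ∨ X ω = 1) :
    X = {ω | X ω = 1}.indicator 1 := by
  funext ω
  rcases hX ω with h | h <;> simp [h]

open Classical in
lemma preimage_eq_of_zero_or_one (hX : ∀ ω, X ω = 0 ∨ X ω = 1) (s : Set ℝ) :
    X ⁻¹' s = (if (1 : ℝ) ∈ s then {ω | X ω = 1} else ∅) ∪
      (if (0 : ℝ) ∈ s then {ω | X ω = 1}ᶜ else ∅) := by
  ext ω
  rcases hX ω with h | h <;> split_ifs <;> simp_all

variable [MeasurableSpace Ω] {μ : Measure Ω} {Y : Ω → ℝ}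

lemma identDistrib_of_zero_or_one [IsProbabilityMeasure μ] (hXm : Measurable X)
    (hYm : Measurable Y) (hX : ∀ ω, X ω = 0 ∨ X ω = 1) (hY : ∀ ω, Y ω = 0 ∨ Y ω = 1)
    (h : μ {ω | X ω = 1} = μ {ω | Y ω = 1}) : IdentDistrib X Y μ μ where
  aemeasurable_fst := hXm.aemeasurable
  aemeasurable_snd := hYm.aemeasurable
  map_eq := by
    ext s hs
    have hcompl : μ {ω | X ω = 1}ᶜ = μ {ω | Y ω = 1}ᶜ := by
      rw [prob_compl_eq_one_sub (measurableSet_eq_fun hXm measurable_const),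
        prob_compl_eq_one_sub (measurableSet_eq_fun hYm measurable_const), h]
    rw [Measure.map_apply hXm hs, Measure.map_apply hYm hs, preimage_eq_of_zero_or_one hX,
      preimage_eq_of_zero_or_one hY]
    split_ifs <;> simp [h, hcompl]

lemma ae_tendsto_average_of_zero_or_one [IsProbabilityMeasure μ] {x : ℕ → Ω → ℝ}
    (hmeas : ∀ i, Measurable (x i)) (hval : ∀ i ω, x i ω = 0 ∨ x i ω = 1)
    (hindep : Pairwise fun i j => IndepFun (x i) (x j) μ)
    (hmean : ∀ i, μ {ω | x i ω = 1} = μ {ω | x 0 ω = 1}) :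
    ∀ᵐ ω ∂μ, Tendsto (fun n : ℕ => (∑ i ∈ range n, x i ω) / n) atTop
      (𝓝 (μ.real {ω | x 0 ω = 1})) := by
  have hind := eq_indicator_of_zero_or_one (hval 0)
  have hset : MeasurableSet {ω | x 0 ω = 1} := hmeas 0 (measurableSet_singleton 1)
  have hint : Integrable (x 0) μ := hind ▸ (integrable_const 1).indicator hset
  have hexp : μ[x 0] = μ.real {ω | x 0 ω = 1} := by
    nth_rw 1 [hind]
    exact integral_indicator_one hset
  simpa [hexp] using strong_law_ae_real x hint hindep fun i =>
    identDistrib_of_zero_or_one (hmeas i) (hmeas 0) (hval i) (hval 0) (hmean i)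

end ZeroOne

section HeadTail

variable {Ω ι β : Type*} [mβ : MeasurableSpace β]

lemma measurable_of_mem_biSup_comap {f : ι → Ω → β} {S : Set ι} {j : ι} (hj : j ∈ S) :
    Measurable[⨆ i ∈ S, MeasurableSpace.comap (f i) mβ] (f j) :=
  Measurable.of_comap_le (le_biSup (fun i => MeasurableSpace.comap (f i) mβ) hj)

variable (x : ℕ → Ω → ℝ) (r : ℝ) (N : ℕ)

def headOnes : Set Ω := ⋂ i ∈ range N, {ω | x i ω = 1}

/-- The `k`-th partial sum of `1, …, 1, x N ω, x (N + 1) ω, …` (`N` ones) is at least `r * k`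
for every `k ≥ N`. -/
def tailBound : Set Ω := {ω | ∀ m, r * ↑(N + m) ≤ N + ∑ i ∈ range m, x (N + i) ω}

variable {x r N}

lemma measurableSet_headOnes :
    MeasurableSet[⨆ i ∈ Set.Iio N, MeasurableSpace.comap (x i) inferInstance] (headOnes x N) :=
  MeasurableSet.biInter (range N).countable_toSet fun _ hi =>
    measurable_of_mem_biSup_comap (Set.mem_Iio.2 (mem_range.1 hi)) (measurableSet_singleton 1)

lemma measurableSet_tailBound :
    MeasurableSet[⨆ i ∈ (Set.Iio N)ᶜ, MeasurableSpace.comap (x i) inferInstance]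
      (tailBound x r N) := by
  simp only [tailBound, Set.ofPred_forall]
  refine MeasurableSet.iInter fun m => measurableSet_le measurable_const ?_
  refine measurable_const.add (Finset.measurable_sum _ fun i _ => ?_)
  exact measurable_of_mem_biSup_comap (by simp)

variable [MeasurableSpace Ω] {μ : Measure Ω}

lemma ProbabilityTheory.iIndepFun.measure_inter_eq_mul_of_biSup {f : ι → Ω → β}
    (hf : iIndepFun f μ) (hmeas : ∀ i, Measurable (f i)) (S : Set ι) {A B : Set Ω}
    (hA : MeasurableSet[⨆ i ∈ S, MeasurableSpace.comap (f i) mβ] A)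
    (hB : MeasurableSet[⨆ i ∈ Sᶜ, MeasurableSpace.comap (f i) mβ] B) :
    μ (A ∩ B) = μ A * μ B :=
  (Indep_iff _ _ _).1 (indep_biSup_compl (fun i => (hmeas i).comap_le) hf.iIndep S) A B hA hB

lemma measure_headOnes (hindep : iIndepFun x μ) :
    μ (headOnes x N) = ∏ i ∈ range N, μ {ω | x i ω = 1} :=
  hindep.meas_biInter fun _ _ => ⟨{1}, measurableSet_singleton 1, rfl⟩

lemma exists_measure_tailBound_pos [NeZero μ] {p : ℝ} (hle : ∀ i ω, x i ω ≤ 1) (hrp : r < p)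
    (hlim : ∀ᵐ ω ∂μ, Tendsto (fun n : ℕ => (∑ i ∈ range n, x i ω) / n) atTop (𝓝 p)) :
    ∃ N, 0 < μ (tailBound x r N) := by
  have hmem : ∀ᵐ ω ∂μ, ∃ N, ω ∈ tailBound x r N := by
    filter_upwards [hlim] with ω hω
    obtain ⟨N, hN⟩ := exists_forall_ge_mul_le_sum_range hω hrp
    exact ⟨N, fun m => (hN (N + m) (N.le_add_right m)).trans
      (sum_range_add_le_of_le_one (hle · ω) m)⟩
  by_contra! hzero
  have hnull : ∀ᵐ ω ∂μ, ∀ N, ω ∉ tailBound x r N :=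
    ae_all_iff.2 fun N => measure_eq_zero_iff_ae_notMem.1 (le_antisymm (hzero N) zero_le)
  obtain ⟨ω, ⟨N, hN⟩, hnot⟩ := (hmem.and hnull).exists
  exact hnot N hN

end HeadTail

theorem positive_prob_never_drop
    {Ω : Type*} [MeasurableSpace Ω] (μ : Measure Ω) [IsProbabilityMeasure μ]
    (x : ℕ → Ω → ℝ) (hmeas : ∀ i, Measurable (x i))
    (hval : ∀ i ω, x i ω = 0 ∨ x i ω = 1)
    (hindep : iIndepFun x μ)
    (p : ℝ) (hp : p ∈ Set.Ioo (0:ℝ) 1)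
    (hmean : ∀ i, μ {ω | x i ω = 1} = ENNReal.ofReal p)
    (ϱ : ℝ) (hϱ : 0 < ϱ) :
    0 < μ {ω | ∀ k : ℕ, 1 ≤ k →
      p - ϱ ≤ (∑ i ∈ Finset.range k, x i ω) / k} := by
  obtain ⟨hp0, hp1⟩ := hp
  have hlim := ae_tendsto_average_of_zero_or_one hmeas hval (fun i j hij => hindep.indepFun hij)
    fun i => (hmean i).trans (hmean 0).symm
  rw [measureReal_def, hmean 0, ENNReal.toReal_ofReal hp0.le] at hlim
  obtain ⟨N, htail⟩ := exists_measure_tailBound_pos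
    (fun i ω => by rcases hval i ω with h | h <;> simp [h]) (sub_lt_self p hϱ) hlim
  have hhead : 0 < μ (headOnes x N) := by
    rw [measure_headOnes hindep]
    simpa [hmean] using ENNReal.pow_pos (ENNReal.ofReal_pos.2 hp0) N
  have hinter := hindep.measure_inter_eq_mul_of_biSup hmeas _ (measurableSet_headOnes (N := N))
    (measurableSet_tailBound (r := p - ϱ))
  refine (ENNReal.mul_pos hhead.ne' htail.ne').trans_le (hinter ▸ measure_mono ?_)
  rintro ω ⟨hω_head, hω_tail⟩ k hk
  rw [le_div_iff₀ (by exact_mod_cast hk)]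
  exact mul_le_sum_range_of_prefix_eq_one (a := (x · ω)) (by linarith)
    (by simpa [headOnes] using hω_head) hω_tail k
end

section
/- Let X ~ HyperGeom(A, B, C) (the number of marked items among B uniformly random draws without replacement from a population of A items of which C are marked) and Y ~ Bin(B, C/A). Then for every convex function f : ℝ → ℝ, E[f(X)] ≤ E[f(Y)]. -/
/-!
Hoeffding's coupling. Draw `h : Fin B → Fin A` uniformly (sampling with replacement) and then
a `B`-subset `t ⊇ range h` uniformly among those containing `range h`. Every `B`-subset `t`
receives the same total mass, so `t` is a uniform sample without replacement. Given `t`, the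
law of `h` is a law on functions into `t` that is invariant under the permutations of `t`, so
each `h j` is uniform on `t` and the expected number of marked draws is `#(t ∩ M)`. Jensen's
inequality for this conditional law, averaged over `t`, is the claim.
-/

open Finset Fintype Function

section Counting

variable {ι α : Type*} [Fintype ι] [DecidableEq ι] [Fintype α] [DecidableEq α]

theorem card_filter_powersetCard_card_inter_eq (M : Finset α) {B k : ℕ} (hk : k ≤ B) :
    #{t ∈ powersetCard B univ | #(t ∩ M) = k}
      = (#M).choose k * (card α - #M).choose (B - k) := by
  have hsplit {a b : Finset α} (ha : a ⊆ M) (hb : b ⊆ Mᶜ) :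
      (a ∪ b) ∩ M = a ∧ (a ∪ b) \ M = b := by
    have hbM : Disjoint b M := disjoint_of_subset_left hb disjoint_compl_left
    rw [union_inter_distrib_right, inter_eq_left.2 ha, disjoint_iff_inter_eq_empty.1 hbM,
      union_empty, union_sdiff_distrib, sdiff_eq_empty_iff_subset.2 ha, empty_union,
      hbM.sdiff_eq_left]
    exact ⟨rfl, rfl⟩
  have : #{t ∈ powersetCard B univ | #(t ∩ M) = k}
      = #(powersetCard k M ×ˢ powersetCard (B - k) Mᶜ) := by
    refine card_nbij' (fun t => (t ∩ M, t \ M)) (fun p => p.1 ∪ p.2) ?_ ?_ ?_ ?_ <;>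
      simp only [Set.MapsTo, Set.LeftInvOn, mem_coe, mem_filter, mem_product, mem_powersetCard,
        subset_univ, true_and, Prod.forall, and_imp]
    · intro t htB htM
      have := card_inter_add_card_sdiff t M
      refine ⟨⟨inter_subset_right, htM⟩, fun x hx => ?_, by omega⟩
      simp_all
    · intro a b haM ha hbM hb
      rw [(hsplit haM hbM).1, card_union_of_disjoint (disjoint_compl_right.mono haM hbM)]
      omega
    · intro t _ _
      exact sup_inf_sdiff t M
    · intro a b haM _ hbM _
      rw [(hsplit haM hbM).1, (hsplit haM hbM).2]
  rw [this, card_product, card_powersetCard, card_powersetCard, card_compl]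

theorem sum_powersetCard_card_inter (M : Finset α) (B : ℕ) (F : ℕ → ℝ) :
    ∑ t ∈ powersetCard B univ, F #(t ∩ M)
      = ∑ k ∈ range (B + 1), ((#M).choose k * (card α - #M).choose (B - k) : ℕ) * F k := by
  have hmaps (t : Finset α) (ht : t ∈ powersetCard B univ) : #(t ∩ M) ∈ range (B + 1) :=
    mem_range_succ_iff.2 ((card_le_card inter_subset_left).trans (mem_powersetCard.1 ht).2.le)
  rw [← sum_fiberwise_of_maps_to' hmaps F]
  refine sum_congr rfl fun k hk => ?_
  rw [sum_const, card_filter_powersetCard_card_inter_eq M (mem_range_succ_iff.1 hk),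
    nsmul_eq_mul]

theorem card_filter_filter_mem_eq (M : Finset α) (S : Finset ι) :
    #{h : ι → α | univ.filter (h · ∈ M) = S}
      = #M ^ #S * (card α - #M) ^ (card ι - #S) := by
  have : ({h : ι → α | univ.filter (h · ∈ M) = S} : Finset _)
      = piFinset fun j => if j ∈ S then M else Mᶜ := by
    ext h
    simp only [mem_filter, mem_univ, true_and, mem_piFinset, Finset.ext_iff]
    refine forall_congr' fun j => ?_
    split_ifs <;> simp [*]
  rw [this, card_piFinset, prod_apply_ite, prod_const, prod_const, card_compl, filter_univ_mem,
    filter_not, filter_univ_mem, ← compl_eq_univ_sdiff, card_compl]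

theorem sum_card_filter_mem (M : Finset α) (F : ℕ → ℝ) :
    ∑ h : ι → α, F #{j | h j ∈ M}
      = ∑ k ∈ range (card ι + 1),
          ((card ι).choose k * (#M ^ k * (card α - #M) ^ (card ι - k)) : ℕ) * F k := by
  calc ∑ h : ι → α, F #{j | h j ∈ M}
      = ∑ S ∈ (univ : Finset ι).powerset,
          ∑ h : ι → α with univ.filter (h · ∈ M) = S, F #S := by
        rw [← sum_fiberwise_of_maps_to
          (fun h _ => mem_powerset.2 (subset_univ (univ.filter (h · ∈ M))))]
        refine sum_congr rfl fun S _ => sum_congr rfl fun h hh => ?_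
        rw [(mem_filter.1 hh).2]
    _ = ∑ S ∈ (univ : Finset ι).powerset,
          ((#M ^ #S * (card α - #M) ^ (card ι - #S) : ℕ) * F #S) := by
        simp only [sum_const, card_filter_filter_mem_eq, nsmul_eq_mul]
    _ = _ := by
        rw [sum_powerset_apply_card
          (fun s => ((#M ^ s * (card α - #M) ^ (card ι - s) : ℕ) * F s))]
        simp [card_univ, nsmul_eq_mul, mul_assoc]

end Counting

section Symmetrization

variable {ι β : Type*} [Fintype ι] [DecidableEq ι] [Fintype β] [DecidableEq β]

theorem card_mul_sum_filter_apply_mem (w : (ι → β) → ℝ)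
    (hw : ∀ (σ : Equiv.Perm β) h, w (σ ∘ h) = w h) (j : ι) (M : Finset β) :
    card β * ∑ h with h j ∈ M, w h = #M * ∑ h, w h := by
  have fiber (b c : β) : ∑ h with h j = b, w h = ∑ h with h j = c, w h :=
    sum_equiv (Equiv.piCongrRight fun _ => Equiv.swap b c)
      (fun h => by simp [Equiv.swap_apply_eq_iff]) fun h _ => (hw (Equiv.swap b c) h).symm
  calc card β * ∑ h with h j ∈ M, w h
      = ∑ c ∈ M, card β * ∑ h with h j = c, w h := by
        rw [← mul_sum, sum_fiberwise_eq_sum_filter]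
    _ = ∑ c ∈ M, ∑ h, w h := by
        refine sum_congr rfl fun c _ => ?_
        rw [← Finset.sum_fiberwise univ (· j) w]
        simp [fiber _ c]
    _ = #M * ∑ h, w h := by rw [sum_const, nsmul_eq_mul]

theorem sum_mul_card_filter_mem (w : (ι → β) → ℝ)
    (hw : ∀ (σ : Equiv.Perm β) h, w (σ ∘ h) = w h) (M : Finset β) :
    card β * ∑ h, w h * #{j | h j ∈ M} = card ι * #M * ∑ h, w h := by
  calc card β * ∑ h, w h * #{j | h j ∈ M}
      = ∑ j, card β * ∑ h with h j ∈ M, w h := by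
        rw [← mul_sum]
        congr 1
        simp only [card_eq_sum_ones, Nat.cast_sum, Nat.cast_one, mul_sum, mul_one]
        exact sum_comm' fun h j => by simp
    _ = card ι * #M * ∑ h, w h := by
        rw [sum_congr rfl fun j _ => card_mul_sum_filter_apply_mem w hw j M, sum_const, card_univ,
          nsmul_eq_mul, mul_assoc]

theorem ConvexOn.sum_mul_le_sum_mul_card_filter_mem {f : ℝ → ℝ} (hf : ConvexOn ℝ Set.univ f)
    (hcard : card ι = card β) (w : (ι → β) → ℝ) (hw₀ : ∀ h, 0 ≤ w h)
    (hw : ∀ (σ : Equiv.Perm β) h, w (σ ∘ h) = w h) (M : Finset β) :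
    (∑ h, w h) * f #M ≤ ∑ h, w h * f #{j | h j ∈ M} := by
  rcases (sum_nonneg fun h (_ : h ∈ univ) => hw₀ h).eq_or_lt with hzero | hpos
  · have := (sum_eq_zero_iff_of_nonneg fun h _ => hw₀ h).1 hzero.symm
    simp only [← hzero, zero_mul]
    simp [this]
  have hmean : ∑ h, w h * #{j | h j ∈ M} = (∑ h, w h) * #M := by
    rcases isEmpty_or_nonempty β with hβ | hβ
    · simp [M.eq_empty_of_isEmpty]
    · have := sum_mul_card_filter_mem w hw M
      rw [hcard] at this
      exact mul_left_cancel₀ (by positivity) (this.trans (by ring))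
  have := hf.map_centerMass_le (p := fun h => (#{j | h j ∈ M} : ℝ)) (fun h _ => hw₀ h) hpos
    (fun h _ => Set.mem_univ _)
  simp only [centerMass, smul_eq_mul, hmean, inv_mul_cancel_left₀ hpos.ne', comp_apply] at this
  exact (le_inv_mul_iff₀ hpos).1 this

end Symmetrization

section Cover

variable {ι α β γ : Type*} [Fintype ι] [Fintype α] [DecidableEq α] [DecidableEq β]
  [DecidableEq γ]

/-- The reciprocal of the number of `card ι`-subsets of an `n`-element set that contain the
range of `h`. -/
noncomputable def coverWeight (n : ℕ) (h : ι → β) : ℝ :=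
  ((n - #(univ.image h)).choose (card ι - #(univ.image h)) : ℝ)⁻¹

lemma coverWeight_nonneg (n : ℕ) (h : ι → β) : 0 ≤ coverWeight n h := by
  unfold coverWeight; positivity

lemma coverWeight_comp_injective (n : ℕ) {e : β → γ} (he : Injective e) (h : ι → β) :
    coverWeight n (e ∘ h) = coverWeight n h := by
  simp only [coverWeight, ← image_image, card_image_of_injective _ he]

variable [DecidableEq ι] [Fintype β] [Fintype γ]

lemma sum_coverWeight_congr (n : ℕ) (e : β ≃ γ) :
    ∑ h : ι → β, coverWeight n h = ∑ h : ι → γ, coverWeight n h :=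
  Fintype.sum_equiv ((Equiv.refl ι).arrowCongr e) _ _ fun h =>
    (coverWeight_comp_injective n e.injective h).symm

theorem sum_eq_sum_powersetCard_sum_coverWeight (hι : card ι ≤ card α)
    (g : (ι → α) → ℝ) :
    ∑ h, g h = ∑ t ∈ powersetCard (card ι) univ,
      ∑ h : ι → t, coverWeight (card α) h * g (Subtype.val ∘ h) := by
  have cover (h : ι → α) :
      ∑ t ∈ powersetCard (card ι) univ with univ.image h ⊆ t,
        coverWeight (card α) h = 1 := by
    have him : #(univ.image h) ≤ card ι := card_image_le
    rw [sum_const, card_filter_powersetCard_subset _ _ _ (subset_univ _) him, card_univ,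
      nsmul_eq_mul, coverWeight, mul_inv_cancel₀]
    exact_mod_cast (Nat.choose_pos (by omega)).ne'
  calc ∑ h, g h
      = ∑ h, ∑ t ∈ powersetCard (card ι) univ with univ.image h ⊆ t,
          coverWeight (card α) h * g h := by
        simp only [← sum_mul, cover, one_mul]
    _ = ∑ t ∈ powersetCard (card ι) univ, ∑ h ∈ univ with ∀ j, h j ∈ t,
          coverWeight (card α) h * g h := by
        refine sum_comm' fun h t => ?_
        simp [image_subset_iff, and_comm]
    _ = _ := by
        refine sum_congr rfl fun t _ => ?_
        rw [sum_subtype (p := fun h : ι → α => ∀ j, h j ∈ t) _ (fun h => by simp)]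
        refine Fintype.sum_equiv Equiv.subtypePiEquivPi _ _ fun h => ?_
        rw [← coverWeight_comp_injective _ Subtype.val_injective]
        rfl

theorem ConvexOn.pow_mul_sum_powersetCard_le {f : ℝ → ℝ} (hf : ConvexOn ℝ Set.univ f)
    (hι : card ι ≤ card α) (M : Finset α) :
    (card α ^ card ι : ℝ) * ∑ t ∈ powersetCard (card ι) univ, f #(t ∩ M)
      ≤ (card α).choose (card ι) * ∑ h : ι → α, f #{j | h j ∈ M} := by
  set G := ∑ u : ι → ι, coverWeight (card α) u
  have hG (t : Finset α) (ht : t ∈ powersetCard (card ι) univ) :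
      ∑ h : ι → t, coverWeight (card α) h = G :=
    sum_coverWeight_congr _ (Fintype.equivOfCardEq (by simpa using ht))
  have hpow : (card α ^ card ι : ℝ) = (card α).choose (card ι) * G := by
    have := sum_eq_sum_powersetCard_sum_coverWeight hι (fun _ => 1)
    simp only [mul_one, sum_congr rfl hG, sum_const, card_univ, card_fun, card_powersetCard,
      nsmul_eq_mul, Nat.cast_pow] at this
    exact this
  have hjensen (t : Finset α) (ht : t ∈ powersetCard (card ι) univ) :
      G * f #(t ∩ M) ≤ ∑ h : ι → t, coverWeight (card α) h * f #{j | (h j).1 ∈ M} := by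
    calc G * f #(t ∩ M)
        = (∑ h : ι → t, coverWeight (card α) h) * f #(M.subtype (· ∈ t)) := by
          rw [hG t ht, card_subtype, filter_mem_eq_inter, inter_comm]
      _ ≤ _ := hf.sum_mul_le_sum_mul_card_filter_mem
          (by rw [card_coe, (mem_powersetCard_univ.1 ht)]) (coverWeight (card α))
          (coverWeight_nonneg _) (fun σ => coverWeight_comp_injective _ σ.injective) _
      _ = _ := by simp only [mem_subtype]
  calc (card α ^ card ι : ℝ) * ∑ t ∈ powersetCard (card ι) univ, f #(t ∩ M)
      = (card α).choose (card ι) * ∑ t ∈ powersetCard (card ι) univ, G * f #(t ∩ M) := by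
        rw [hpow, mul_assoc, mul_sum]
    _ ≤ (card α).choose (card ι) * ∑ t ∈ powersetCard (card ι) univ,
          ∑ h : ι → t, coverWeight (card α) h * f #{j | (h j).1 ∈ M} := by
        gcongr with t ht
        exact hjensen t ht
    _ = (card α).choose (card ι) * ∑ h : ι → α, f #{j | h j ∈ M} := by
        rw [sum_eq_sum_powersetCard_sum_coverWeight hι (fun h => f #{j | h j ∈ M})]
        rfl

end Cover

theorem choose_mul_div_pow_mul_one_sub_div_pow {A B C k : ℕ} (hA : A ≠ 0) (hC : C ≤ A)
    (hk : k ≤ B) :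
    (B.choose k : ℝ) * ((C : ℝ) / A) ^ k * (1 - (C : ℝ) / A) ^ (B - k)
      = ((A : ℝ) ^ B)⁻¹ * (B.choose k * (C ^ k * (A - C) ^ (B - k)) : ℕ) := by
  have hpow : (A : ℝ) ^ B = A ^ k * A ^ (B - k) := by rw [← pow_add, Nat.add_sub_cancel' hk]
  rw [one_sub_div (Nat.cast_ne_zero.2 hA), div_pow, div_pow, hpow]
  push_cast [hC]
  field_simp

/-- Hoeffding's theorem: the hypergeometric distribution is dominated by the
corresponding binomial distribution in the convex order. -/
theorem hypergeom_le_binomial_convex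
    (A B C : ℕ) (hA : 1 ≤ A) (hB : B ≤ A) (hC : C ≤ A)
    (f : ℝ → ℝ) (hf : ConvexOn ℝ Set.univ f) :
    ∑ k ∈ Finset.range (B + 1),
        ((C.choose k : ℝ) * ((A - C).choose (B - k)) / (A.choose B)) * f k
      ≤ ∑ k ∈ Finset.range (B + 1),
        ((B.choose k : ℝ) * ((C : ℝ) / A) ^ k * (1 - (C : ℝ) / A) ^ (B - k)) * f k := by
  set M : Finset (Fin A) := {a | (a : ℕ) < C}
  have hM : #M = C := by simp [M, Fin.card_filter_val_lt, hC]
  have key := hf.pow_mul_sum_powersetCard_le (ι := Fin B) (by simpa using hB) M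
  rw [sum_powersetCard_card_inter M _ (fun n : ℕ => f n),
    sum_card_filter_mem M (fun n : ℕ => f n)] at key
  simp only [Fintype.card_fin, hM] at key
  have hAB : (0 : ℝ) < A.choose B := by exact_mod_cast Nat.choose_pos hB
  calc ∑ k ∈ range (B + 1), ((C.choose k : ℝ) * ((A - C).choose (B - k)) / (A.choose B)) * f k
      = (A.choose B : ℝ)⁻¹ *
          ∑ k ∈ range (B + 1), ((C.choose k * (A - C).choose (B - k) : ℕ) : ℝ) * f k := by
        rw [mul_sum]
        refine sum_congr rfl fun k _ => ?_
        push_cast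
        ring
    _ ≤ ((A : ℝ) ^ B)⁻¹ *
          ∑ k ∈ range (B + 1),
            ((B.choose k * (C ^ k * (A - C) ^ (B - k)) : ℕ) : ℝ) * f k := by
        rw [inv_mul_le_iff₀ hAB, mul_left_comm, le_inv_mul_iff₀ (by positivity)]
        exact key
    _ = _ := by
        rw [mul_sum]
        refine sum_congr rfl fun k hk => ?_
        rw [choose_mul_div_pow_mul_one_sub_div_pow (by omega) hC (mem_range_succ_iff.1 hk),
          mul_assoc]
end
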